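/- arXiv:2006.14497 — 2 statements merged into one kernel-verified Lean document; each statement's English description precedes it below -/
import Mathlib

section
/- Let T > 0, τ > 0 with T/τ ≥ 4, and let N ≥ 1 photons have arrival times t_1, …, t_N that are independent and uniformly distributed on [0, T]. Then the expected number of surviving photons equals E_S(N) = 2(1 − τ/T)^N + (N − 2)(1 − 2τ/T)^N. -/
/-!
The number of survivors is a sum of `N` indicators, so its expectation is `N` times the
probability that photon `i` survives. Conditioning on `t i = x`, the other `N - 1` photons are
independent, each landing outside `(x - τ, x + τ)` with probability
`p(x) = 1 - |(x - τ, x + τ) ∩ [0, T]| / T` (`isolationProb`); hence photon `i` survives with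
probability `(1/T) ∫₀ᵀ p(x)^(N-1) dx`. As `2τ ≤ T`, `p` is affine on `[0, τ]` and on
`[T - τ, T]` and equals `1 - 2τ/T` in between, which gives the integral in closed form.
-/

open MeasureTheory

/-- The uniform probability measure on `[0, T]`. -/
noncomputable def unifIcc (T : ℝ) : Measure ℝ :=
  (ENNReal.ofReal T)⁻¹ • volume.restrict (Set.Icc 0 T)

/-- The number of surviving photons: photon `i` survives if every other photon
arrives at least `τ` away from it. -/
noncomputable def survivors (τ : ℝ) {N : ℕ} (t : Fin N → ℝ) : ℕ :=
  Set.ncard {i : Fin N | ∀ j : Fin N, j ≠ i → τ ≤ |t i - t j|}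

open Set

theorem integral_ncard_setOf_mem {ι Ω : Type*} [Fintype ι] [MeasurableSpace Ω]
    (μ : Measure Ω) [IsFiniteMeasure μ] {S : ι → Set Ω} (hS : ∀ i, MeasurableSet (S i)) :
    ∫ ω, ({i | ω ∈ S i}.ncard : ℝ) ∂μ = ∑ i, μ.real (S i) := by
  classical
  have hcount (ω : Ω) : ({i | ω ∈ S i}.ncard : ℝ) = ∑ i, (S i).indicator 1 ω := by
    rw [ncard_eq_toFinset_card', toFinset_ofPred, Finset.card_filter]
    push_cast
    simp only [indicator_apply, Pi.one_apply]
  simp_rw [hcount]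
  rw [integral_finsetSum _ fun i _ => (integrable_const 1).indicator (hS i)]
  simp_rw [integral_indicator_one (hS _)]

section ForallNe

variable {α : Type*} [MeasurableSpace α] {R : α → α → Prop} {n : ℕ}

theorem measurableSet_forall_ne (hR : MeasurableSet {p : α × α | R p.1 p.2}) {N : ℕ}
    (i : Fin N) : MeasurableSet {t : Fin N → α | ∀ j, j ≠ i → R (t i) (t j)} := by
  simp only [ofPred_forall]
  exact .iInter fun j => .iInter fun _ =>
    hR.preimage (f := fun t : Fin N → α => (t i, t j)) (by fun_prop)

theorem measure_pi_forall_ne (μ : Measure α) [SigmaFinite μ]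
    (hR : MeasurableSet {p : α × α | R p.1 p.2}) (i : Fin (n + 1)) :
    Measure.pi (fun _ => μ) {t | ∀ j, j ≠ i → R (t i) (t j)} =
      ∫⁻ x, μ {z | R x z} ^ n ∂μ := by
  set S := {p : α × (Fin n → α) | ∀ k, R p.1 (p.2 k)}
  have hS : MeasurableSet S := by
    simp only [S, ofPred_forall]
    exact .iInter fun k =>
      hR.preimage (f := fun p : α × (Fin n → α) => (p.1, p.2 k)) (by fun_prop)
  have hpre : (MeasurableEquiv.piFinSuccAbove (fun _ => α) i).symm ⁻¹'
      {t | ∀ j, j ≠ i → R (t i) (t j)} = S := by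
    ext ⟨x, y⟩
    simp [MeasurableEquiv.piFinSuccAbove_symm_apply, Fin.insertNthEquiv, S,
      Fin.forall_iff_succAbove i]
  have hsection (x : α) : Prod.mk x ⁻¹' S = univ.pi fun _ => {z | R x z} := by
    ext y; simp [S]
  rw [← ((measurePreserving_piFinSuccAbove (fun _ => μ) i).symm.measure_preimage
      (measurableSet_forall_ne hR i).nullMeasurableSet), hpre, Measure.prod_apply hS]
  simp_rw [hsection, Measure.pi_pi, Finset.prod_const, Finset.card_univ, Fintype.card_fin]

theorem measureReal_pi_forall_ne (μ : Measure α) [IsFiniteMeasure μ]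
    (hR : MeasurableSet {p : α × α | R p.1 p.2}) (i : Fin (n + 1)) :
    (Measure.pi fun _ => μ).real {t | ∀ j, j ≠ i → R (t i) (t j)} =
      ∫ x, μ.real {z | R x z} ^ n ∂μ := by
  rw [measureReal_def, measure_pi_forall_ne μ hR i, ← integral_toReal]
  · simp [measureReal_def]
  · exact ((measurable_measure_prodMk_left hR).pow_const n).aemeasurable
  · exact .of_forall fun x => ENNReal.pow_lt_top (measure_lt_top μ _)

end ForallNe

section Uniform

variable {T : ℝ}

theorem isProbabilityMeasure_unifIcc (hT : 0 < T) : IsProbabilityMeasure (unifIcc T) := by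
  constructor
  rw [unifIcc, Measure.smul_apply, Measure.restrict_apply_univ, Real.volume_Icc, sub_zero,
    smul_eq_mul, ENNReal.inv_mul_cancel (by simpa using hT) ENNReal.ofReal_ne_top]

theorem integral_unifIcc (hT : 0 ≤ T) (f : ℝ → ℝ) :
    ∫ x, f x ∂unifIcc T = T⁻¹ * ∫ x in 0..T, f x := by
  rw [unifIcc, integral_smul_measure, ENNReal.toReal_inv, ENNReal.toReal_ofReal hT,
    integral_Icc_eq_integral_Ioc, ← intervalIntegral.integral_of_le hT, smul_eq_mul]

theorem measureReal_unifIcc_ball {τ x : ℝ} (hτ : 0 ≤ τ) (hx : x ∈ Icc 0 T) :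
    (unifIcc T).real (Metric.ball x τ) = (min T (x + τ) - max 0 (x - τ)) / T := by
  obtain ⟨hx0, hxT⟩ := hx
  have hlen : 0 ≤ min T (x + τ) - max 0 (x - τ) :=
    sub_nonneg.2 (max_le (le_min (by linarith) (by linarith)) (le_min (by linarith) (by linarith)))
  have hvol : volume (Metric.ball x τ ∩ Icc 0 T) =
      ENNReal.ofReal (min T (x + τ) - max 0 (x - τ)) := by
    rw [measure_congr ((ae_eq_refl _).inter Ioo_ae_eq_Icc.symm), Real.ball_eq_Ioo, Ioo_inter_Ioo,
      Real.volume_Ioo, max_comm, min_comm]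
  rw [measureReal_def, unifIcc, Measure.smul_apply, Measure.restrict_apply measurableSet_ball,
    hvol, smul_eq_mul, ENNReal.toReal_mul, ENNReal.toReal_inv,
    ENNReal.toReal_ofReal (hx0.trans hxT), ENNReal.toReal_ofReal hlen, inv_mul_eq_div]

end Uniform

theorem integral_div_pow (n : ℕ) (a b : ℝ) {c : ℝ} (hc : c ≠ 0) :
    ∫ x in a..b, (x / c) ^ n = c * ((b / c) ^ (n + 1) - (a / c) ^ (n + 1)) / (n + 1) := by
  rw [intervalIntegral.integral_comp_div (fun x => x ^ n) hc, integral_pow, smul_eq_mul,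
    mul_div_assoc]

noncomputable def isolationProb (T τ x : ℝ) : ℝ := 1 - (min T (x + τ) - max 0 (x - τ)) / T

section Isolation

variable {T τ : ℝ}

theorem continuous_isolationProb : Continuous (isolationProb T τ) := by
  unfold isolationProb; fun_prop

theorem measurableSet_le_abs_sub (τ : ℝ) : MeasurableSet {p : ℝ × ℝ | τ ≤ |p.1 - p.2|} :=
  measurableSet_le measurable_const (by fun_prop)

theorem measureReal_unifIcc_le_abs_sub (hT : 0 < T) (hτ : 0 ≤ τ) {x : ℝ}
    (hx : x ∈ Icc 0 T) :
    (unifIcc T).real {z | τ ≤ |x - z|} = isolationProb T τ x := by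
  have := isProbabilityMeasure_unifIcc hT
  have hfar : {z | τ ≤ |x - z|} = (Metric.ball x τ)ᶜ := by
    ext z; simp [Real.dist_eq, abs_sub_comm]
  rw [hfar, probReal_compl_eq_one_sub measurableSet_ball, measureReal_unifIcc_ball hτ hx,
    isolationProb]

theorem measureReal_pi_unifIcc_isolated (hT : 0 < T) (hτ : 0 ≤ τ) {n : ℕ} (i : Fin (n + 1)) :
    (Measure.pi fun _ => unifIcc T).real {t | ∀ j, j ≠ i → τ ≤ |t i - t j|} =
      T⁻¹ * ∫ x in 0..T, isolationProb T τ x ^ n := by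
  have := isProbabilityMeasure_unifIcc hT
  rw [measureReal_pi_forall_ne (R := fun x z => τ ≤ |x - z|) _ (measurableSet_le_abs_sub τ) i,
    integral_unifIcc hT.le]
  congr 1
  refine intervalIntegral.integral_congr fun x hx => ?_
  rw [uIcc_of_le hT.le] at hx
  simp only [measureReal_unifIcc_le_abs_sub hT hτ hx]

theorem integral_isolationProb_pow (hT : 0 < T) (hτ : 0 ≤ τ) (h : 2 * τ ≤ T) (n : ℕ) :
    ∫ x in 0..T, isolationProb T τ x ^ n =
      T * (2 * ((1 - τ / T) ^ (n + 1) - (1 - 2 * τ / T) ^ (n + 1)) / (n + 1) +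
        (1 - 2 * τ / T) ^ (n + 1)) := by
  have hint (a b : ℝ) : IntervalIntegrable (fun x => isolationProb T τ x ^ n) volume a b :=
    (continuous_isolationProb.pow n).intervalIntegrable a b
  have hleft :
      ∫ x in 0..τ, isolationProb T τ x ^ n = ∫ x in 0..τ, ((T - τ - x) / T) ^ n := by
    refine intervalIntegral.integral_congr fun x hx => ?_
    rw [uIcc_of_le hτ] at hx
    simp only [isolationProb, min_eq_right (by linarith [hx.2] : x + τ ≤ T),
      max_eq_left (by linarith [hx.2] : x - τ ≤ 0)]
    field_simp; ring
  have hmid :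
      ∫ x in τ..T - τ, isolationProb T τ x ^ n =
        ∫ _ in τ..T - τ, (1 - 2 * τ / T) ^ n := by
    refine intervalIntegral.integral_congr fun x hx => ?_
    rw [uIcc_of_le (by linarith)] at hx
    simp only [isolationProb, min_eq_right (by linarith [hx.2] : x + τ ≤ T),
      max_eq_right (by linarith [hx.1] : 0 ≤ x - τ)]
    ring
  have hright :
      ∫ x in T - τ..T, isolationProb T τ x ^ n = ∫ x in T - τ..T, ((x - τ) / T) ^ n := by
    refine intervalIntegral.integral_congr fun x hx => ?_
    rw [uIcc_of_le (by linarith)] at hx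
    simp only [isolationProb, min_eq_left (by linarith [hx.1] : T ≤ x + τ),
      max_eq_right (by linarith [hx.1] : 0 ≤ x - τ)]
    field_simp; ring
  rw [← intervalIntegral.integral_add_adjacent_intervals (hint 0 τ) (hint τ T),
    ← intervalIntegral.integral_add_adjacent_intervals (hint τ (T - τ)) (hint (T - τ) T),
    hleft, hmid, hright, intervalIntegral.integral_comp_sub_left (fun y => (y / T) ^ n),
    intervalIntegral.integral_comp_sub_right (fun y => (y / T) ^ n),
    intervalIntegral.integral_const, integral_div_pow n _ _ hT.ne',
    integral_div_pow n _ _ hT.ne', smul_eq_mul]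
  have ha : (T - τ) / T = 1 - τ / T := by field_simp
  have hb : (T - τ - τ) / T = 1 - 2 * τ / T := by field_simp; ring
  have hb' : T - τ - τ = T * (1 - 2 * τ / T) := by field_simp; ring
  rw [sub_zero, ha, hb, hb']
  ring

end Isolation

theorem expected_surviving_photons_general (T τ : ℝ) (hT : 0 < T) (hτ : 0 < τ)
    (hratio : 4 ≤ T / τ) (N : ℕ) :
    ∫ t : Fin N → ℝ, (survivors τ t : ℝ)
        ∂(Measure.pi fun _ : Fin N => unifIcc T) =
      2 * (1 - τ / T) ^ N + ((N : ℝ) - 2) * (1 - 2 * τ / T) ^ N := by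
  cases N with
  | zero => simp [survivors]
  | succ n =>
    have := isProbabilityMeasure_unifIcc hT
    have h2τ : 2 * τ ≤ T := by rw [le_div_iff₀ hτ] at hratio; linarith
    let isolated (i : Fin (n + 1)) : Set (Fin (n + 1) → ℝ) :=
      {t | ∀ j, j ≠ i → τ ≤ |t i - t j|}
    refine (integral_ncard_setOf_mem (S := isolated) _ fun i =>
      measurableSet_forall_ne (R := fun x z => τ ≤ |x - z|)
        (measurableSet_le_abs_sub τ) i).trans ?_
    simp only [isolated, measureReal_pi_unifIcc_isolated hT hτ.le,
      integral_isolationProb_pow hT hτ.le h2τ,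
      inv_mul_cancel_left₀ hT.ne', Finset.sum_const, Finset.card_univ, Fintype.card_fin,
      nsmul_eq_mul]
    push_cast
    field_simp
    ring

/-- **part of Theorem 1 of the paper.** For `T/τ ≥ 4` and `N ≥ 1`
photons with i.i.d. uniform arrival times on `[0, T]`, the expected number of
surviving photons is `2(1 − τ/T)^N + (N − 2)(1 − 2τ/T)^N`. -/
theorem expected_surviving_photons (T τ : ℝ) (hT : 0 < T) (hτ : 0 < τ)
    (hratio : 4 ≤ T / τ) (N : ℕ) (hN : 1 ≤ N) :
    ∫ t : Fin N → ℝ, (survivors τ t : ℝ)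
        ∂(Measure.pi fun _ : Fin N => unifIcc T) =
      2 * (1 - τ / T) ^ N + ((N : ℝ) - 2) * (1 - 2 * τ / T) ^ N :=
  expected_surviving_photons_general T τ hT hτ hratio N
end

section
/- Let T > 0, τ > 0 with T/τ ≥ 4 and λ > 0. Then the Poisson mixture of the conditional second moment of the number of surviving photons satisfies D_λ = Σ_{N=0}^∞ e^{−λT} (λT)^N / N! · [2(1 − τ/T)^N + (N + 4)(1 − 2τ/T)^N + (N² − 7N + 12)(1 − 4τ/T)^N + (6N − 18)(1 − 3τ/T)^N] = 2 e^{−λτ} + (λ(T − 2τ) + 4) e^{−2λτ} + (6(λT − 3λτ) − 18) e^{−3λτ} + ((λT − 4λτ)² − 6(λT − 4λτ) + 12) e^{−4λτ}. -/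
/-!
Writing `x = λT` and `q = 1 - kτ/T`, each of the four terms is a quadratic polynomial in `N`
times `q ^ N`, averaged against the Poisson weights `e^{-x} x^N / N!`. Since
`x^N q^N = (qx)^N`, this is `e^{-x}` times a series whose value follows from the factorial
moments `∑ N.descFactorial k * y^N / N! = y^k e^y` of the exponential series, and
`qx - x = -kλτ`.
-/

open Real Finset Nat

theorem hasSum_descFactorial_mul_pow_div_factorial (k : ℕ) (y : ℝ) :
    HasSum (fun n : ℕ => (n.descFactorial k : ℝ) * (y ^ n / n !)) (y ^ k * exp y) := by
  have hlow : ∑ i ∈ range k, ((i.descFactorial k : ℕ) : ℝ) * (y ^ i / i !) = 0 :=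
    sum_eq_zero fun i hi => by
      rw [descFactorial_eq_zero_iff_lt.mpr (mem_range.mp hi), cast_zero, zero_mul]
  rw [← hasSum_nat_add_iff' k, hlow, sub_zero, exp_eq_exp_ℝ]
  refine ((NormedSpace.expSeries_div_hasSum_exp y).mul_left (y ^ k)).congr_fun fun n => ?_
  have hfac : ((n + k)! : ℝ) = n ! * (n + k).descFactorial k := by
    exact_mod_cast (add_tsub_cancel_right n k ▸ factorial_mul_descFactorial le_add_self).symm
  have : ((n + k).descFactorial k : ℝ) ≠ 0 := by
    exact_mod_cast (descFactorial_pos.mpr le_add_self).ne'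
  rw [hfac, pow_add]
  field_simp

theorem hasSum_quadratic_mul_pow_div_factorial (a b c y : ℝ) :
    HasSum (fun n : ℕ => (a * n ^ 2 + b * n + c) * (y ^ n / n !))
      ((a * (y ^ 2 + y) + b * y + c) * exp y) := by
  -- `n ^ 2 = n (n - 1) + n`
  have h := (((hasSum_descFactorial_mul_pow_div_factorial 2 y).mul_left a).add
    ((hasSum_descFactorial_mul_pow_div_factorial 1 y).mul_left (a + b))).add
    ((hasSum_descFactorial_mul_pow_div_factorial 0 y).mul_left c)
  rw [show (a * (y ^ 2 + y) + b * y + c) * exp y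
      = a * (y ^ 2 * exp y) + (a + b) * (y ^ 1 * exp y) + c * (y ^ 0 * exp y) by ring]
  refine h.congr_fun fun n => ?_
  rcases n with _ | n
  · simp
  · simp only [descFactorial_succ, descFactorial_zero, add_tsub_cancel_right, tsub_zero,
      cast_mul, cast_add, cast_one, mul_one]
    ring

theorem hasSum_poisson_mul_quadratic_mul_pow (a b c x q : ℝ) :
    HasSum (fun n : ℕ => exp (-x) * x ^ n / n ! * ((a * n ^ 2 + b * n + c) * q ^ n))
      ((a * ((q * x) ^ 2 + q * x) + b * (q * x) + c) * exp (q * x - x)) := by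
  rw [sub_eq_neg_add, exp_add, mul_left_comm]
  refine ((hasSum_quadratic_mul_pow_div_factorial a b c (q * x)).mul_left (exp (-x))).congr_fun
    fun n => ?_
  ring

theorem poisson_second_moment_surviving_general (T τ lv : ℝ) (hT : 0 < T) :
    ∑' N : ℕ, Real.exp (-(lv * T)) * (lv * T) ^ N / N.factorial *
        (2 * (1 - τ / T) ^ N + ((N : ℝ) + 4) * (1 - 2 * τ / T) ^ N
          + ((N : ℝ) ^ 2 - 7 * (N : ℝ) + 12) * (1 - 4 * τ / T) ^ N
          + (6 * (N : ℝ) - 18) * (1 - 3 * τ / T) ^ N) =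
      2 * Real.exp (-(lv * τ)) + (lv * (T - 2 * τ) + 4) * Real.exp (-(2 * lv * τ))
        + (6 * (lv * T - 3 * lv * τ) - 18) * Real.exp (-(3 * lv * τ))
        + ((lv * T - 4 * lv * τ) ^ 2 - 6 * (lv * T - 4 * lv * τ) + 12)
            * Real.exp (-(4 * lv * τ)) := by
  have hsum := (((hasSum_poisson_mul_quadratic_mul_pow 0 0 2 (lv * T) (1 - 1 * τ / T)).add
    (hasSum_poisson_mul_quadratic_mul_pow 0 1 4 (lv * T) (1 - 2 * τ / T))).add
    (hasSum_poisson_mul_quadratic_mul_pow 1 (-7) 12 (lv * T) (1 - 4 * τ / T))).add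
    (hasSum_poisson_mul_quadratic_mul_pow 0 6 (-18) (lv * T) (1 - 3 * τ / T))
  have hthin (k : ℝ) : (1 - k * τ / T) * (lv * T) = lv * T - k * lv * τ := by
    field_simp
  rw [hthin, hthin, hthin, hthin] at hsum
  refine (hsum.congr_fun fun N => ?_).tsum_eq.trans ?_
  · ring
  · ring_nf

/-- For `T/τ ≥ 4` and rate `lv > 0`, the Poisson mixture of the
conditional second moment of the number of surviving photons equals the
displayed closed form. -/
theorem poisson_second_moment_surviving (T τ lv : ℝ) (hT : 0 < T) (hτ : 0 < τ)
    (hratio : 4 ≤ T / τ) (hlv : 0 < lv) :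
    ∑' N : ℕ, Real.exp (-(lv * T)) * (lv * T) ^ N / N.factorial *
        (2 * (1 - τ / T) ^ N + ((N : ℝ) + 4) * (1 - 2 * τ / T) ^ N
          + ((N : ℝ) ^ 2 - 7 * (N : ℝ) + 12) * (1 - 4 * τ / T) ^ N
          + (6 * (N : ℝ) - 18) * (1 - 3 * τ / T) ^ N) =
      2 * Real.exp (-(lv * τ)) + (lv * (T - 2 * τ) + 4) * Real.exp (-(2 * lv * τ))
        + (6 * (lv * T - 3 * lv * τ) - 18) * Real.exp (-(3 * lv * τ))
        + ((lv * T - 4 * lv * τ) ^ 2 - 6 * (lv * T - 4 * lv * τ) + 12)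
            * Real.exp (-(4 * lv * τ)) :=
  poisson_second_moment_surviving_general T τ lv hT
end
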